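/- Let T be a two-row increasing tableau whose lattice word w satisfies w_1 ≠ ∅ and has no balance point and no teetering point. Then the lattice word of the K-promotion of T is obtained from w by deleting the first letter and appending {1}; if instead w has no balance point but has a teetering point with first teetering point j_t, the new lattice word is obtained by changing w_{j_t} from {1,2} to {1}, deleting the first letter, and appending {1,2}. If w_1 = ∅, the new lattice word is obtained by deleting w_1 and appending ∅. -/

import Mathlib

open Classical

/-- A cell `(row, col)` (0-indexed) of a Young diagram. -/
abbrev Cell : Type := ℕ × ℕ

/-- The cell `c` lies in the Young diagram of the shape `lam`. -/
def inShape (lam : List ℕ) (c : Cell) : Prop := c.2 < lam.getD c.1 0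

/-- `lam` is an integer partition (weakly decreasing list of positive parts). -/
def IsPartition (lam : List ℕ) : Prop :=
  lam.Pairwise (· ≥ ·) ∧ ∀ x ∈ lam, 0 < x

/-- An increasing tableau of shape `lam` with entries in `{1,…,q}`
(rows and columns strictly increase); cells outside the shape carry `0`. -/
structure IncTab (lam : List ℕ) (q : ℕ) where
  entry : Cell → ℕ
  entry_pos : ∀ c, inShape lam c → 1 ≤ entry c
  entry_le : ∀ c, inShape lam c → entry c ≤ q
  row_strict : ∀ i j : ℕ, inShape lam (i, j + 1) → entry (i, j) < entry (i, j + 1)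
  col_strict : ∀ i j : ℕ, inShape lam (i + 1, j) → entry (i, j) < entry (i + 1, j)
  zero_outside : ∀ c, ¬ inShape lam c → entry c = 0

/-- A standard Young tableau: a bijective filling by `1, …, n` where `n = |lam|`. -/
def IsStandard (lam : List ℕ) (n : ℕ) (T : IncTab lam n) : Prop :=
  n = lam.sum ∧ ∀ v, 1 ≤ v → v ≤ n → ∃! c, inShape lam c ∧ T.entry c = v

/-- Every value of `{1,…,q}` appears in the tableau. -/
def Packed (lam : List ℕ) (q : ℕ) (T : IncTab lam q) : Prop :=
  ∀ v, 1 ≤ v → v ≤ q → ∃ c : Cell, inShape lam c ∧ T.entry c = v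

/-- During (K-)gromotion, a vacated box is recorded by the value `0` (a "bullet"). -/
def isBullet (lam : List ℕ) (f : Cell → ℕ) (c : Cell) : Prop :=
  inShape lam c ∧ f c = 0

/-- `c` carries value `v` and is adjacent (on its left or above) to a bullet box. -/
def inC (lam : List ℕ) (f : Cell → ℕ) (v : ℕ) (c : Cell) : Prop :=
  inShape lam c ∧ f c = v ∧
    ((1 ≤ c.2 ∧ isBullet lam f (c.1, c.2 - 1)) ∨ (1 ≤ c.1 ∧ isBullet lam f (c.1 - 1, c.2)))

/-- One K-jeu-de-taquin substep: simultaneously all boxes with value `v` adjacent to a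
bullet become bullets, and the bullets adjacent to them receive value `v`. -/
noncomputable def substep (lam : List ℕ) (v : ℕ) (f : Cell → ℕ) : Cell → ℕ :=
  fun c =>
    if inC lam f v c then 0
    else if isBullet lam f c ∧ (inC lam f v (c.1, c.2 + 1) ∨ inC lam f v (c.1 + 1, c.2)) then v
    else f c

/-- The `j`-th value of the cyclically shifted alphabet `(α < α+1 < … < q < 1 < … < α-1)`. -/
def cyc (q α j : ℕ) : ℕ := (α - 1 + j) % q + 1

/-- State of the gromotion slide (at stage `α` of the alphabet cycle) after `j` substeps;
the base case deletes the minimal letter `α` from the upper-left corner. -/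
noncomputable def iterSub (lam : List ℕ) (q α : ℕ) (f : Cell → ℕ) : ℕ → Cell → ℕ
  | 0 => fun c => if c = ((0, 0) : Cell) ∧ f c = α then 0 else f c
  | j + 1 => substep lam (cyc q α (j + 1)) (iterSub lam q α f j)

/-- One application of (K-)gromotion at stage `α`: slide, then fill the vacated boxes
with the removed letter `α` (now maximal in the cycled alphabet). -/
noncomputable def gromote (lam : List ℕ) (q α : ℕ) (f : Cell → ℕ) : Cell → ℕ :=
  fun c =>
    if inShape lam c ∧ iterSub lam q α f (q - 1) c = 0 then α
    else iterSub lam q α f (q - 1) c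

/-- The `k`-th iterate of (K-)gromotion (stages cycle through `1, …, q`). -/
noncomputable def gromIter (lam : List ℕ) (q : ℕ) (f : Cell → ℕ) : ℕ → Cell → ℕ
  | 0 => f
  | k + 1 => gromote lam q (k % q + 1) (gromIter lam q f k)

/-- In state `f`, the value `v` is about to move from row `i+1` to row `i` (1-indexed):
a bullet in (1-indexed) row `i` has the box below it about to slide up with value `v`. -/
def moveAt (lam : List ℕ) (f : Cell → ℕ) (v i : ℕ) : Prop :=
  ∃ c : Cell, isBullet lam f c ∧ c.1 + 1 = i ∧ inC lam f v (c.1 + 1, c.2)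

/-- Edge `α → β` of the `i`-th promotion digraph `prom_i(T)`:
during the `α`-th application of (K-)gromotion, value `β` moves from row `i+1` to row `i`. -/
def promEdge (lam : List ℕ) (q i : ℕ) (T : IncTab lam q) (α β : ℕ) : Prop :=
  1 ≤ α ∧ α ≤ q ∧
  ∃ j : ℕ, j + 1 ≤ q - 1 ∧ cyc q α (j + 1) = β ∧
    moveAt lam (iterSub lam q α (gromIter lam q T.entry (α - 1)) j) β i

/-- (K-)promotion: gromotion at stage `1` followed by the relabeling `v ↦ v - 1`,
with the removed letter (temporarily `1`) becoming `q`. -/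
noncomputable def kpromote (lam : List ℕ) (q : ℕ) (f : Cell → ℕ) : Cell → ℕ :=
  fun c =>
    if inShape lam c then
      (if gromote lam q 1 f c = 1 then q else gromote lam q 1 f c - 1)
    else 0

/-- Value `v` appears in (1-indexed) row `r` of the filling `f`. -/
def appearsRow (lam : List ℕ) (f : Cell → ℕ) (r v : ℕ) : Prop :=
  1 ≤ r ∧ ∃ j : ℕ, inShape lam (r - 1, j) ∧ f (r - 1, j) = v

/-- The letter of the lattice word at position `v`: the set of (1-indexed) rows
containing value `v`. -/
def rowSetW (lam : List ℕ) (f : Cell → ℕ) (v : ℕ) : Set ℕ :=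
  {r | appearsRow lam f r v}

/-- For a standard filling: the (1-indexed) row containing value `v`. -/
noncomputable def latticeRow (lam : List ℕ) (f : Cell → ℕ) (v : ℕ) : ℕ :=
  sInf {r | appearsRow lam f r v}

/-- Number of occurrences of letter `r` among the first `j` letters of the lattice word:
the number of values `v ≤ j` appearing in row `r`. -/
noncomputable def cnt (lam : List ℕ) (f : Cell → ℕ) (r j : ℕ) : ℕ :=
  ((Finset.Icc 1 j).filter fun v => appearsRow lam f r v).card

/-- `j` is a (1-)balance point of the lattice word of a two-row filling. -/
def isBalance (lam : List ℕ) (f : Cell → ℕ) (j : ℕ) : Prop :=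
  cnt lam f 1 j = cnt lam f 2 j

/-- `j` is a (1-)teetering point of the lattice word of a two-row filling. -/
def isTeeter (lam : List ℕ) (f : Cell → ℕ) (j : ℕ) : Prop :=
  appearsRow lam f 1 j ∧ appearsRow lam f 2 j ∧ cnt lam f 1 j = cnt lam f 2 j + 1

/-- A noncrossing perfect matching of `{1,…,n}`, as a symmetric relation. -/
def IsNCMatching (n : ℕ) (M : ℕ → ℕ → Prop) : Prop :=
  (∀ a b, M a b → 1 ≤ a ∧ a ≤ n ∧ 1 ≤ b ∧ b ≤ n ∧ a ≠ b) ∧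
  (∀ a b, M a b → M b a) ∧
  (∀ a, 1 ≤ a → a ≤ n → ∃! b, M a b) ∧
  (∀ a b x y, M a x → M b y → ¬ (a < b ∧ b < x ∧ x < y))

/-- Number of occurrences of letter `r` among positions `a, …, b` of the lattice word
of a standard two-row filling. -/
noncomputable def letterCnt (lam : List ℕ) (f : Cell → ℕ) (r a b : ℕ) : ℕ :=
  ((Finset.Icc a b).filter fun p => latticeRow lam f p = r).card

/-- Positions `a < b` are matched in the noncrossing matching of the lattice word:
`w_a = 1`, `w_b = 2`, the interval `[a,b]` is balanced, and every proper prefix of it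
has strictly more `1`s than `2`s (i.e. `b` is the nearest available `2` for `a`). -/
def matchRel (lam : List ℕ) (f : Cell → ℕ) (a b : ℕ) : Prop :=
  a < b ∧ latticeRow lam f a = 1 ∧ latticeRow lam f b = 2 ∧
  letterCnt lam f 1 a b = letterCnt lam f 2 a b ∧
  ∀ m, a ≤ m → m < b → letterCnt lam f 2 a m < letterCnt lam f 1 a m

/-- The (symmetrized) noncrossing matching associated to a two-row standard filling. -/
def symMatch (lam : List ℕ) (f : Cell → ℕ) (a b : ℕ) : Prop :=
  matchRel lam f a b ∨ matchRel lam f b a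

/-- A noncrossing set partition of `{1,…,q}`, encoded by its "same block" relation. -/
def IsNCPartition (q : ℕ) (R : ℕ → ℕ → Prop) : Prop :=
  (∀ a b, R a b → 1 ≤ a ∧ a ≤ q ∧ 1 ≤ b ∧ b ≤ q) ∧
  (∀ a, 1 ≤ a → a ≤ q → R a a) ∧
  (∀ a b, R a b → R b a) ∧
  (∀ a b c, R a b → R b c → R a c) ∧
  (∀ a b x y, a < x → x < b → b < y → R a b → R x y → R a x)

/-- The defining compatibility between a two-row increasing tableau (given by its
filling `f`) and its noncrossing set partition `R` (Pechenik): singleton blocks are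
the absent values; least elements of nontrivial blocks are the values appearing only
in the top row; greatest elements are the values appearing only in the bottom row;
middle elements are the values appearing in both rows. -/
def BlockCompat (lam : List ℕ) (q : ℕ) (f : Cell → ℕ) (R : ℕ → ℕ → Prop) : Prop :=
  ∀ v, 1 ≤ v → v ≤ q →
    ((∀ u, R v u → u = v) ↔ ¬ ∃ c : Cell, inShape lam c ∧ f c = v) ∧
    (((∃ u, R v u ∧ v < u) ∧ ∀ u, R v u → v ≤ u) ↔
      (appearsRow lam f 1 v ∧ ¬ appearsRow lam f 2 v)) ∧
    (((∃ u, R v u ∧ u < v) ∧ ∀ u, R v u → u ≤ v) ↔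
      (appearsRow lam f 2 v ∧ ¬ appearsRow lam f 1 v)) ∧
    (((∃ u, R v u ∧ u < v) ∧ (∃ u, R v u ∧ v < u)) ↔
      (appearsRow lam f 1 v ∧ appearsRow lam f 2 v))


/-!
Removing the corner entry `1` leaves a bullet in row 1. Write `P v` and `Q v` for the numbers
of entries `≤ v` in rows 1 and 2, i.e. the counts of the letters `1` and `2` among the first `v`
letters of the lattice word; after the letters `1, …, v` have slid, the row-1 bullet sits in
column `P v - 1`. Without balance points `Q v < P v`. The letter `v + 1` reaches the bullet from
below only if it sits in column `P v - 1` of row 2, i.e. `Q (v + 1) = P v`: this makes `v + 1` a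
balance point if `v + 1` is missing from row 1 and a teetering point otherwise. Hence the bullet
runs along row 1 up to the first teetering point `j_t`; there both copies of `j_t` move at once
and the bullet splits into one bullet per row, which from then on slide along their own rows
(`Q v < P v` keeps the row-2 bullet to the left of the row-1 bullet). In the end row 1 has lost
its `1` and row 2 its copy of `j_t`, and each row ends in a bullet that becomes the new letter
`q`; the relabelling `v ↦ v - 1` then shifts the lattice word by one letter. If `1` does not
occur at all, nothing slides.
-/

lemma inShape_pair_iff {l1 l2 : ℕ} {c : Cell} :
    inShape [l1, l2] c ↔ (c.1 = 0 ∧ c.2 < l1) ∨ (c.1 = 1 ∧ c.2 < l2) := by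
  obtain ⟨_ | _ | i, j⟩ := c <;> simp [inShape]

lemma appearsRow_succ_iff {lam : List ℕ} {f : Cell → ℕ} {i v : ℕ} :
    appearsRow lam f (i + 1) v ↔ ∃ j < lam.getD i 0, f (i, j) = v := by
  simp [appearsRow, inShape]

lemma mem_rowSetW_pair {l1 l2 : ℕ} {f : Cell → ℕ} {v x : ℕ} :
    x ∈ rowSetW [l1, l2] f v ↔
      (x = 1 ∧ ∃ j < l1, f (0, j) = v) ∨ (x = 2 ∧ ∃ j < l2, f (1, j) = v) := by
  obtain _ | _ | _ | x := x <;> simp [rowSetW, appearsRow, inShape]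

lemma rowSetW_congr {lam : List ℕ} {f g : Cell → ℕ} {v w : ℕ}
    (h : ∀ c, inShape lam c → (f c = v ↔ g c = w)) : rowSetW lam f v = rowSetW lam g w := by
  ext x
  simp only [rowSetW, appearsRow, Set.mem_ofPred_eq]
  exact and_congr_right fun _ => exists_congr fun j => and_congr_right (h _)

lemma cnt_succ (lam : List ℕ) (f : Cell → ℕ) (x v : ℕ) :
    cnt lam f x (v + 1) = cnt lam f x v + if appearsRow lam f x (v + 1) then 1 else 0 := by
  rw [cnt, ← Finset.insert_Icc_right_eq_Icc_add_one (by omega), Finset.filter_insert]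
  split_ifs
  · rw [Finset.card_insert_of_notMem (by simp)]; rfl
  · rfl

lemma cnt_mono (lam : List ℕ) (f : Cell → ℕ) (x : ℕ) : Monotone (cnt lam f x) :=
  fun _ _ h => Finset.card_le_card (Finset.filter_subset_filter _ (Finset.Icc_subset_Icc_right h))

lemma exists_ne_and_eq_iff_of_injOn {g : ℕ → ℕ} {L k v : ℕ} (hg : Set.InjOn g (Set.Iio L))
    (hk : k < L) : (∃ j < L, j ≠ k ∧ g j = v) ↔ (∃ j < L, g j = v) ∧ g k ≠ v := by
  constructor
  · rintro ⟨j, hj, hjk, rfl⟩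
    exact ⟨⟨j, hj, rfl⟩, fun h => hjk (hg hj hk h.symm)⟩
  · rintro ⟨⟨j, hj, rfl⟩, hne⟩
    exact ⟨j, hj, by rintro rfl; exact hne rfl, rfl⟩

namespace IncTab

variable {lam : List ℕ} {q : ℕ} (T : IncTab lam q)

lemma entry_ne_zero {c : Cell} (h : inShape lam c) : T.entry c ≠ 0 :=
  Nat.one_le_iff_ne_zero.mp (T.entry_pos _ h)

lemma not_isBullet (c : Cell) : ¬ isBullet lam T.entry c :=
  fun h => T.entry_ne_zero h.1 h.2

lemma entry_ne_one_of_rowSetW_one_eq_empty (h : rowSetW lam T.entry 1 = ∅) {c : Cell}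
    (hc : inShape lam c) : T.entry c ≠ 1 := by
  intro h1
  have : c.1 + 1 ∈ rowSetW lam T.entry 1 := appearsRow_succ_iff.mpr ⟨c.2, hc, h1⟩
  simp [h] at this

lemma strictMonoOn_row (i : ℕ) :
    StrictMonoOn (fun j => T.entry (i, j)) (Set.Iio (lam.getD i 0)) :=
  strictMonoOn_of_lt_add_one Set.ordConnected_Iio fun j _ _ hj => T.row_strict i j hj

lemma cnt_le (i v : ℕ) : cnt lam T.entry (i + 1) v ≤ lam.getD i 0 := by
  refine (Finset.card_le_card fun u hu => ?_).trans ((Finset.card_image_le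
    (s := Finset.range (lam.getD i 0)) (f := fun j => T.entry (i, j))).trans_eq
    (Finset.card_range _))
  obtain ⟨j, hj, rfl⟩ := appearsRow_succ_iff.mp (Finset.mem_filter.mp hu).2
  exact Finset.mem_image_of_mem _ (Finset.mem_range.mpr hj)

lemma cnt_entry {i j : ℕ} (hj : j < lam.getD i 0) :
    cnt lam T.entry (i + 1) (T.entry (i, j)) = j + 1 := by
  have hmono := T.strictMonoOn_row i
  rw [cnt, ← Finset.card_range (j + 1), ← Finset.card_image_of_injOn
    (hmono.injOn.mono fun k hk => (Finset.mem_range.mp hk).trans_le hj)]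
  congr 1
  ext u
  simp only [Finset.mem_filter, Finset.mem_Icc, appearsRow_succ_iff, Finset.mem_image,
    Finset.mem_range]
  constructor
  · rintro ⟨⟨-, hu⟩, k, hk, rfl⟩
    exact ⟨k, by simpa [hmono.le_iff_le hk hj] using hu, rfl⟩
  · rintro ⟨k, hk, rfl⟩
    have hk' : k < lam.getD i 0 := by omega
    exact ⟨⟨T.entry_pos _ hk', (hmono.le_iff_le hk' hj).mpr (by omega)⟩, k, hk', rfl⟩

lemma cnt_eq_length (i : ℕ) : cnt lam T.entry (i + 1) q = lam.getD i 0 := by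
  refine le_antisymm (T.cnt_le i q) ?_
  obtain h | h := Nat.eq_zero_or_pos (lam.getD i 0)
  · omega
  · have hlast : lam.getD i 0 - 1 < lam.getD i 0 := by omega
    calc lam.getD i 0 = cnt lam T.entry (i + 1) (T.entry (i, lam.getD i 0 - 1)) := by
          rw [T.cnt_entry hlast]; omega
      _ ≤ cnt lam T.entry (i + 1) q := cnt_mono _ _ _ (T.entry_le _ hlast)

lemma cnt_succ_eq_ite (i v : ℕ) :
    cnt lam T.entry (i + 1) (v + 1) =
      if cnt lam T.entry (i + 1) v < lam.getD i 0 ∧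
          T.entry (i, cnt lam T.entry (i + 1) v) = v + 1
        then cnt lam T.entry (i + 1) v + 1 else cnt lam T.entry (i + 1) v := by
  have hsucc := cnt_succ lam T.entry (i + 1) v
  by_cases h : appearsRow lam T.entry (i + 1) (v + 1)
  · obtain ⟨j, hj, hjv⟩ := appearsRow_succ_iff.mp h
    have hcnt := T.cnt_entry hj
    rw [if_pos h] at hsucc
    rw [hjv] at hcnt
    have hj' : cnt lam T.entry (i + 1) v = j := by omega
    rw [hsucc, hj', if_pos ⟨hj, hjv⟩]
  · rw [if_neg h] at hsucc
    rw [hsucc, if_neg fun h' => h (appearsRow_succ_iff.mpr ⟨_, h'⟩), add_zero]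

end IncTab

section Promotion

variable {lam : List ℕ} {q : ℕ} {f : Cell → ℕ}

lemma iterSub_succ_of_lt {k : ℕ} (hk : k + 1 < q) :
    iterSub lam q 1 f (k + 1) = substep lam (k + 2) (iterSub lam q 1 f k) := by
  simp only [iterSub, cyc, Nat.sub_self, zero_add, Nat.mod_eq_of_lt hk]

lemma substep_eq_self (v : ℕ) (h : ∀ c, ¬ isBullet lam f c) : substep lam v f = f := by
  have hC : ∀ c, ¬ inC lam f v c := by
    rintro c ⟨-, -, ⟨-, hb⟩ | ⟨-, hb⟩⟩ <;> exact h _ hb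
  funext c
  simp only [substep, if_neg (hC c), if_neg fun h' : _ ∧ _ => h _ h'.1]

lemma iterSub_eq_self {α : ℕ} (hα : f (0, 0) ≠ α) (h : ∀ c, ¬ isBullet lam f c) :
    ∀ k, iterSub lam q α f k = f
  | 0 => by
    funext c
    refine if_neg ?_
    rintro ⟨rfl, h⟩
    exact hα h
  | k + 1 => by rw [iterSub, iterSub_eq_self hα h k, substep_eq_self _ h]

lemma kpromote_apply {c : Cell} (hc : inShape lam c) (h1 : iterSub lam q 1 f (q - 1) c ≠ 1) :
    kpromote lam q f c =
      if iterSub lam q 1 f (q - 1) c = 0 then q else iterSub lam q 1 f (q - 1) c - 1 := by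
  simp only [kpromote, gromote, hc, true_and, if_true]
  split_ifs <;> omega

variable {F : Cell → ℕ} (hfin : iterSub lam q 1 f (q - 1) = F)
  (hF : ∀ c, inShape lam c → F c ≠ 1 ∧ F c ≤ q)
include hfin hF

lemma rowSetW_kpromote_of_lt {m : ℕ} (hm : 1 ≤ m) (hmq : m < q) :
    rowSetW lam (kpromote lam q f) m = rowSetW lam F (m + 1) :=
  rowSetW_congr fun c hc => by
    have := hF c hc
    rw [kpromote_apply hc (hfin ▸ this.1), hfin]
    split_ifs <;> omega

lemma rowSetW_kpromote_self : rowSetW lam (kpromote lam q f) q = rowSetW lam F 0 :=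
  rowSetW_congr fun c hc => by
    have := hF c hc
    rw [kpromote_apply hc (hfin ▸ this.1), hfin]
    split_ifs <;> omega

end Promotion

lemma rowSetW_kpromote_of_rowSetW_one_eq_empty {lam : List ℕ} {q : ℕ} (T : IncTab lam q)
    (h : rowSetW lam T.entry 1 = ∅) :
    (∀ m, 1 ≤ m → m < q →
      rowSetW lam (kpromote lam q T.entry) m = rowSetW lam T.entry (m + 1)) ∧
    rowSetW lam (kpromote lam q T.entry) q = ∅ := by
  have hiter : iterSub lam q 1 T.entry (q - 1) = T.entry := by
    refine iterSub_eq_self (fun h1 => ?_) T.not_isBullet (q - 1)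
    by_cases hc : inShape lam (0, 0)
    · exact T.entry_ne_one_of_rowSetW_one_eq_empty h hc h1
    · simp [T.zero_outside _ hc] at h1
  have hF : ∀ c, inShape lam c → T.entry c ≠ 1 ∧ T.entry c ≤ q := fun c hc =>
    ⟨T.entry_ne_one_of_rowSetW_one_eq_empty h hc, T.entry_le c hc⟩
  refine ⟨fun m hm hmq => rowSetW_kpromote_of_lt hiter hF hm hmq, ?_⟩
  rw [rowSetW_kpromote_self hiter hF, Set.eq_empty_iff_forall_notMem]
  rintro x ⟨-, j, hj, h0⟩
  exact T.not_isBullet _ ⟨hj, h0⟩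

/-- Row `g` in which the entries of columns `s, …, b - 1` have slid one column to the left,
leaving a bullet in column `b - 1`; `b = 0` leaves the row unchanged, and `s = 0` acts as
`s = 1`. -/
def slideRow (g : ℕ → ℕ) (s b j : ℕ) : ℕ :=
  if j + 1 = b then 0 else if s ≤ j + 1 ∧ j + 1 < b then g (j + 1) else g j

/-- Row 1 of `f` slid up to a bullet in column `p - 1`, row 2 slid from column `s` up to a
bullet in column `r - 1`. -/
def slideState (f : Cell → ℕ) (p s r : ℕ) : Cell → ℕ := fun c =>
  if c.1 = 0 then slideRow (fun j => f (0, j)) 0 p c.2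
  else if c.1 = 1 then slideRow (fun j => f (1, j)) s r c.2
  else f c

lemma slideState_zero (f : Cell → ℕ) (p s r j : ℕ) :
    slideState f p s r (0, j) = slideRow (fun j => f (0, j)) 0 p j := rfl

lemma slideState_one (f : Cell → ℕ) (p s r j : ℕ) :
    slideState f p s r (1, j) = slideRow (fun j => f (1, j)) s r j := rfl

lemma slideRow_zero (g : ℕ → ℕ) (s : ℕ) : slideRow g s 0 = g := by
  funext j
  simp [slideRow]

lemma exists_slideRow_eq_zero (g : ℕ → ℕ) {s L : ℕ} (hL : 0 < L) :
    ∃ j < L, slideRow g s L j = 0 :=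
  ⟨L - 1, by omega, by simp [slideRow, Nat.sub_add_cancel hL]⟩

lemma exists_slideRow_eq_iff {g : ℕ → ℕ} {s L v : ℕ} (hs : s ≤ L) (hv : v ≠ 0) :
    (∃ j < L, slideRow g s L j = v) ↔ ∃ j < L, j ≠ s - 1 ∧ g j = v := by
  simp only [slideRow]
  constructor
  · rintro ⟨j, hj, hjv⟩
    split_ifs at hjv
    · exact absurd hjv.symm hv
    · exact ⟨j + 1, by omega, by omega, hjv⟩
    · exact ⟨j, hj, by omega, hjv⟩
  · rintro ⟨j, hj, hjs, rfl⟩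
    by_cases hjs' : j + 1 < s
    · exact ⟨j, hj, by rw [if_neg (by omega), if_neg (by omega)]⟩
    · refine ⟨j - 1, by omega, ?_⟩
      rw [if_neg (by omega), if_pos (by omega), Nat.sub_add_cancel (by omega)]

section Slide

variable {l1 l2 q : ℕ} (T : IncTab [l1, l2] q)

lemma isBullet_slideState {p s r : ℕ} (hp : p ≤ l1) (hr : r ≤ l2) {c : Cell} :
    isBullet [l1, l2] (slideState T.entry p s r) c ↔
      (c.1 = 0 ∧ c.2 + 1 = p) ∨ (c.1 = 1 ∧ c.2 + 1 = r) := by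
  obtain ⟨i, j⟩ := c
  have := @T.entry_ne_zero
  simp only [isBullet, inShape_pair_iff, slideState, slideRow]
  split_ifs <;> grind [inShape_pair_iff]

variable {p s r w : ℕ} (hp1 : 1 ≤ p) (hpl : p ≤ l1) (hrl : r ≤ l2) (hrp : r < p)
include hp1 hpl hrl hrp

lemma inC_slideState {c : Cell} :
    inC [l1, l2] (slideState T.entry p s r) w c ↔
      (c = (0, p) ∧ p < l1 ∧ T.entry (0, p) = w) ∨
      (c = (1, r) ∧ 1 ≤ r ∧ r < l2 ∧ T.entry (1, r) = w) ∨
      (c = (1, p - 1) ∧ p - 1 < l2 ∧ T.entry (1, p - 1) = w) := by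
  obtain ⟨i, j⟩ := c
  simp only [inC, isBullet_slideState T hpl hrl, inShape_pair_iff, Prod.mk.injEq]
  simp only [slideState, slideRow]
  split_ifs <;> grind

/-- `hV` rules out vertical slides, except into the row-1 bullet from a cell that is also the
right neighbour of the row-2 bullet, when both bullets advance. -/
lemma substep_slideState (hsr : s ≤ r)
    (hV : p - 1 < l2 → T.entry (1, p - 1) = w →
      1 ≤ r ∧ r + 1 = p ∧ p < l1 ∧ T.entry (0, p) = w) :
    substep [l1, l2] w (slideState T.entry p s r) =
      slideState T.entry (if p < l1 ∧ T.entry (0, p) = w then p + 1 else p) s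
        (if 1 ≤ r ∧ r < l2 ∧ T.entry (1, r) = w then r + 1 else r) := by
  funext ⟨i, j⟩
  simp only [substep, inC_slideState T hp1 hpl hrl hrp, isBullet_slideState T hpl hrl,
    Prod.mk.injEq]
  simp only [slideState, slideRow]
  split_ifs <;> grind

omit hrl hrp in
/-- The K-theoretic split: `w` lies both right of and below the bullet, so the bullet takes the
value `w` while both copies of `w` turn into bullets. -/
lemma substep_slideState_split (hA : p < l1 ∧ T.entry (0, p) = w)
    (hV : p - 1 < l2 ∧ T.entry (1, p - 1) = w) :
    substep [l1, l2] w (slideState T.entry p s 0) = slideState T.entry (p + 1) p p := by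
  funext ⟨i, j⟩
  simp only [substep, inC_slideState T hp1 hpl (Nat.zero_le _) hp1,
    isBullet_slideState T hpl (Nat.zero_le _), Prod.mk.injEq]
  simp only [slideState, slideRow]
  split_ifs <;> grind

end Slide

namespace IncTab

variable {l1 l2 q : ℕ} (T : IncTab [l1, l2] q)

lemma pos_of_entry_zero_zero_eq_one (h00 : T.entry (0, 0) = 1) : 0 < l1 := by
  by_contra h
  have := T.zero_outside (0, 0) (by simp [inShape_pair_iff]; omega)
  omega

lemma entry_zero_zero_eq_one (hll : l2 ≤ l1) (h : rowSetW [l1, l2] T.entry 1 ≠ ∅) :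
    T.entry (0, 0) = 1 := by
  obtain ⟨x, hx⟩ := Set.nonempty_iff_ne_empty.mpr h
  rcases mem_rowSetW_pair.mp hx with ⟨-, j, hj, h1⟩ | ⟨-, j, hj, h1⟩
  · obtain rfl | hj0 := Nat.eq_zero_or_pos j
    · exact h1
    · have := (T.strictMonoOn_row 0) (show 0 < l1 by omega) hj hj0
      have := T.entry_pos (0, 0) (show 0 < l1 by omega)
      simp only at *
      omega
  · have : T.entry (0, j) < T.entry (1, j) := T.col_strict 0 j hj
    have := T.entry_pos (0, j) (show j < l1 by omega)
    omega

lemma cnt_one_entry {j : ℕ} (hj : j < l1) : cnt [l1, l2] T.entry 1 (T.entry (0, j)) = j + 1 :=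
  T.cnt_entry (i := 0) hj

lemma cnt_two_entry {j : ℕ} (hj : j < l2) : cnt [l1, l2] T.entry 2 (T.entry (1, j)) = j + 1 :=
  T.cnt_entry (i := 1) hj

lemma cnt_one_succ_eq_ite (v : ℕ) :
    cnt [l1, l2] T.entry 1 (v + 1) =
      if cnt [l1, l2] T.entry 1 v < l1 ∧ T.entry (0, cnt [l1, l2] T.entry 1 v) = v + 1
        then cnt [l1, l2] T.entry 1 v + 1 else cnt [l1, l2] T.entry 1 v :=
  T.cnt_succ_eq_ite 0 v

lemma cnt_two_succ_eq_ite (v : ℕ) :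
    cnt [l1, l2] T.entry 2 (v + 1) =
      if cnt [l1, l2] T.entry 2 v < l2 ∧ T.entry (1, cnt [l1, l2] T.entry 2 v) = v + 1
        then cnt [l1, l2] T.entry 2 v + 1 else cnt [l1, l2] T.entry 2 v :=
  T.cnt_succ_eq_ite 1 v

variable (h00 : T.entry (0, 0) = 1) (hll : l2 ≤ l1)
include h00

omit hll in
lemma cnt_one_one_eq_one : cnt [l1, l2] T.entry 1 1 = 1 := by
  simpa [h00] using T.cnt_one_entry (l2 := l2) (T.pos_of_entry_zero_zero_eq_one h00)

omit hll in
lemma one_le_cnt_one {v : ℕ} (hv : 1 ≤ v) : 1 ≤ cnt [l1, l2] T.entry 1 v :=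
  (T.cnt_one_one_eq_one h00).symm.trans_le (cnt_mono _ _ _ hv)

include hll

lemma one_lt_entry {c : Cell} (hc : inShape [l1, l2] c) (hc0 : c ≠ (0, 0)) :
    1 < T.entry c := by
  obtain ⟨i, j⟩ := c
  rcases inShape_pair_iff.mp hc with ⟨rfl, hj⟩ | ⟨rfl, hj⟩
  · have := (T.strictMonoOn_row 0) (show 0 < l1 by omega) hj (by grind)
    simp only at this
    omega
  · have : T.entry (0, j) < T.entry (1, j) := T.col_strict 0 j hc
    have := T.entry_pos (0, j) (show j < l1 by omega)
    omega

lemma cnt_two_one_eq_zero : cnt [l1, l2] T.entry 2 1 = 0 := by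
  rw [cnt_succ, if_neg]
  · rfl
  · rw [appearsRow_succ_iff]
    rintro ⟨j, hj, h1⟩
    exact (T.one_lt_entry h00 hll (c := (1, j)) hj (by simp)).ne' h1

lemma cnt_two_lt_cnt_one (hnb : ∀ v, 1 ≤ v → v ≤ q → ¬ isBalance [l1, l2] T.entry v) :
    ∀ v, 1 ≤ v → v ≤ q → cnt [l1, l2] T.entry 2 v < cnt [l1, l2] T.entry 1 v := by
  intro v hv
  induction v, hv using Nat.le_induction with
  | base =>
    intro
    rw [T.cnt_two_one_eq_zero h00 hll]
    exact T.one_le_cnt_one h00 le_rfl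
  | succ v hv ih =>
    intro hvq
    have := ih (by omega)
    have h2 := cnt_succ [l1, l2] T.entry 2 v
    have h1 := cnt_mono [l1, l2] T.entry 1 (show v ≤ v + 1 by omega)
    have := hnb (v + 1) (by omega) hvq
    unfold isBalance at this
    split_ifs at h2 <;> omega

end IncTab

section Steps

variable {l1 l2 q : ℕ} (T : IncTab [l1, l2] q)

lemma iterSub_zero_eq_slideState (h00 : T.entry (0, 0) = 1) :
    iterSub [l1, l2] q 1 T.entry 0 = slideState T.entry 1 0 0 := by
  funext ⟨i, j⟩
  simp only [iterSub, slideState, slideRow, Prod.mk.injEq]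
  split_ifs <;> grind

lemma substep_slideState_of_not_isTeeter {v : ℕ} (hp1 : 1 ≤ cnt [l1, l2] T.entry 1 v)
    (hb : ¬ isBalance [l1, l2] T.entry (v + 1)) (ht : ¬ isTeeter [l1, l2] T.entry (v + 1)) :
    substep [l1, l2] (v + 1) (slideState T.entry (cnt [l1, l2] T.entry 1 v) 0 0) =
      slideState T.entry (cnt [l1, l2] T.entry 1 (v + 1)) 0 0 := by
  have hvert : cnt [l1, l2] T.entry 1 v - 1 < l2 →
      T.entry (1, cnt [l1, l2] T.entry 1 v - 1) ≠ v + 1 := by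
    intro hl h1
    have h2 := T.cnt_two_entry hl
    rw [h1, Nat.sub_add_cancel hp1] at h2
    have hP := T.cnt_one_succ_eq_ite v
    unfold isBalance at hb
    split_ifs at hP with hA
    · exact ht ⟨appearsRow_succ_iff.mpr ⟨_, hA⟩, appearsRow_succ_iff.mpr ⟨_, hl, h1⟩,
        by omega⟩
    · omega
  rw [substep_slideState T hp1 (T.cnt_le 0 v) (Nat.zero_le _) hp1 le_rfl
    fun hl h1 => (hvert hl h1).elim, T.cnt_one_succ_eq_ite v,
    if_neg (show ¬(1 ≤ 0 ∧ _) from fun h => absurd h.1 (by omega))]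

lemma substep_slideState_of_isTeeter {v : ℕ} (ht : isTeeter [l1, l2] T.entry (v + 1)) :
    substep [l1, l2] (v + 1) (slideState T.entry (cnt [l1, l2] T.entry 1 v) 0 0) =
      slideState T.entry (cnt [l1, l2] T.entry 1 (v + 1)) (cnt [l1, l2] T.entry 2 (v + 1))
        (cnt [l1, l2] T.entry 2 (v + 1)) := by
  obtain ⟨ht1, ht2, hcnt⟩ := ht
  obtain ⟨j1, hj1, h1⟩ := appearsRow_succ_iff.mp ht1
  obtain ⟨j2, hj2, h2⟩ := appearsRow_succ_iff.mp ht2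
  have e1 : cnt [l1, l2] T.entry 1 (v + 1) = j1 + 1 := h1 ▸ T.cnt_one_entry hj1
  have e2 : cnt [l1, l2] T.entry 2 (v + 1) = j2 + 1 := h2 ▸ T.cnt_two_entry hj2
  have e0 : cnt [l1, l2] T.entry 1 v = j1 := by
    have := cnt_succ [l1, l2] T.entry 1 v
    rw [if_pos ht1] at this
    omega
  have hj : j1 - 1 = j2 := by omega
  rw [e0, e1, e2, show j2 + 1 = j1 by omega]
  exact substep_slideState_split T (by omega) hj1.le ⟨hj1, h1⟩ (hj ▸ ⟨hj2, h2⟩)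

lemma substep_slideState_of_not_isBalance {v s : ℕ} (hr1 : 1 ≤ cnt [l1, l2] T.entry 2 v)
    (hrp : cnt [l1, l2] T.entry 2 v < cnt [l1, l2] T.entry 1 v)
    (hs : s ≤ cnt [l1, l2] T.entry 2 v) (hb : ¬ isBalance [l1, l2] T.entry (v + 1)) :
    substep [l1, l2] (v + 1)
        (slideState T.entry (cnt [l1, l2] T.entry 1 v) s (cnt [l1, l2] T.entry 2 v)) =
      slideState T.entry (cnt [l1, l2] T.entry 1 (v + 1)) s
        (cnt [l1, l2] T.entry 2 (v + 1)) := by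
  have hP := T.cnt_one_succ_eq_ite v
  have hQ := T.cnt_two_succ_eq_ite v
  rw [substep_slideState T (hr1.trans hrp.le) (T.cnt_le 0 v) (T.cnt_le 1 v) hrp hs, hP, hQ]
  · simp [hr1]
  intro hl h1
  have h2 := T.cnt_two_entry hl
  rw [h1, Nat.sub_add_cancel (hr1.trans hrp.le)] at h2
  unfold isBalance at hb
  split_ifs at hP hQ <;> grind

end Steps

section Iteration

variable {l1 l2 q : ℕ} (T : IncTab [l1, l2] q) (h00 : T.entry (0, 0) = 1)
  (hnb : ∀ v, 1 ≤ v → v ≤ q → ¬ isBalance [l1, l2] T.entry v)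
include h00 hnb

lemma iterSub_eq_slideState_of_lt {N : ℕ} (hN : N ≤ q)
    (hnt : ∀ v, 1 ≤ v → v ≤ N → ¬ isTeeter [l1, l2] T.entry v) :
    ∀ k < N,
      iterSub [l1, l2] q 1 T.entry k = slideState T.entry (cnt [l1, l2] T.entry 1 (k + 1)) 0 0
  | 0, _ => by rw [iterSub_zero_eq_slideState T h00, zero_add, T.cnt_one_one_eq_one h00]
  | k + 1, hk => by
    rw [iterSub_succ_of_lt (by omega), iterSub_eq_slideState_of_lt hN hnt k (by omega)]
    exact substep_slideState_of_not_isTeeter T (T.one_le_cnt_one h00 (by omega))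
      (hnb _ (by omega) (by omega)) (hnt _ (by omega) (by omega))

variable (hll : l2 ≤ l1) {jt : ℕ} (hjt : isTeeter [l1, l2] T.entry jt) (hjtq : jt ≤ q)
  (hfirst : ∀ v, 1 ≤ v → v < jt → ¬ isTeeter [l1, l2] T.entry v)
include hll hjt hjtq hfirst

lemma iterSub_eq_slideState_of_le {k : ℕ} (hk : jt ≤ k + 1) (hkq : k < q) :
    iterSub [l1, l2] q 1 T.entry k =
      slideState T.entry (cnt [l1, l2] T.entry 1 (k + 1)) (cnt [l1, l2] T.entry 2 jt)
        (cnt [l1, l2] T.entry 2 (k + 1)) := by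
  obtain ⟨j2, hj2, h2⟩ := appearsRow_succ_iff.mp hjt.2.1
  have hQjt : 1 ≤ cnt [l1, l2] T.entry 2 jt := by rw [← h2, T.cnt_two_entry hj2]; omega
  obtain ⟨u, rfl⟩ : ∃ u, jt = u + 2 :=
    ⟨jt - 2, by have := h2 ▸ T.one_lt_entry h00 hll (c := (1, j2)) hj2 (by simp); omega⟩
  induction k, (show u + 1 ≤ k by omega) using Nat.le_induction with
  | base =>
    rw [iterSub_succ_of_lt (by omega), iterSub_eq_slideState_of_lt T h00 hnb
      (N := u + 1) (by omega) (fun v hv hvu => hfirst v hv (by omega)) u (by omega)]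
    exact substep_slideState_of_isTeeter T hjt
  | succ k hk ih =>
    have hmono := cnt_mono [l1, l2] T.entry 2 (show u + 2 ≤ k + 1 by omega)
    rw [iterSub_succ_of_lt hkq, ih (by omega) (by omega)]
    exact substep_slideState_of_not_isBalance T (hQjt.trans hmono)
      (T.cnt_two_lt_cnt_one h00 hll hnb _ (by omega) (by omega)) hmono
      (hnb _ (by omega) (by omega))

end Iteration

section FinalState

variable {l1 l2 q : ℕ} (T : IncTab [l1, l2] q) (h00 : T.entry (0, 0) = 1) (hll : l2 ≤ l1)
include h00 hll

lemma slideState_ne_one_and_le {s r : ℕ} (hr : r ≤ l2) {c : Cell} (hc : inShape [l1, l2] c) :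
    slideState T.entry l1 s r c ≠ 1 ∧ slideState T.entry l1 s r c ≤ q := by
  have key : ∀ c', inShape [l1, l2] c' → c' ≠ (0, 0) →
      T.entry c' ≠ 1 ∧ T.entry c' ≤ q :=
    fun c' hc' hc0 => ⟨(T.one_lt_entry h00 hll hc' hc0).ne', T.entry_le c' hc'⟩
  obtain ⟨i, j⟩ := c
  rcases inShape_pair_iff.mp hc with ⟨rfl, hj⟩ | ⟨rfl, hj⟩ <;>
    simp only [slideState_zero, slideState_one, slideRow] <;> split_ifs <;>
    first
    | omega
    | exact key _ (by simp [inShape_pair_iff]; omega) (by simp only [ne_eq, Prod.mk.injEq]; omega)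

omit hll in
lemma exists_slideRow_row_one_eq_iff {v : ℕ} (hv : 1 < v) :
    (∃ j < l1, slideRow (fun j => T.entry (0, j)) 0 l1 j = v) ↔
      ∃ j < l1, T.entry (0, j) = v := by
  rw [exists_slideRow_eq_iff (Nat.zero_le _) (by omega), Nat.zero_sub,
    exists_ne_and_eq_iff_of_injOn (L := l1) (T.strictMonoOn_row 0).injOn
      (T.pos_of_entry_zero_zero_eq_one h00)]
  simp only [h00, ne_eq, hv.ne, not_false_eq_true, and_true]

lemma rowSetW_kpromote_of_not_isTeeter
    (hnb : ∀ j, 1 ≤ j → j ≤ q → ¬ isBalance [l1, l2] T.entry j)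
    (hnt : ∀ j, 1 ≤ j → j ≤ q → ¬ isTeeter [l1, l2] T.entry j) :
    (∀ m, 1 ≤ m → m < q →
      rowSetW [l1, l2] (kpromote [l1, l2] q T.entry) m = rowSetW [l1, l2] T.entry (m + 1)) ∧
    rowSetW [l1, l2] (kpromote [l1, l2] q T.entry) q = {1} := by
  have hl1 := T.pos_of_entry_zero_zero_eq_one h00
  have hq : 1 ≤ q := h00 ▸ T.entry_le (0, 0) hl1
  have hfin : iterSub [l1, l2] q 1 T.entry (q - 1) = slideState T.entry l1 0 0 := by
    rw [iterSub_eq_slideState_of_lt T h00 hnb le_rfl hnt (q - 1) (by omega),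
      Nat.sub_add_cancel hq, T.cnt_eq_length 0]
    rfl
  have hF := fun c => slideState_ne_one_and_le T h00 hll (c := c) (s := 0) (Nat.zero_le _)
  refine ⟨fun m hm hmq => ?_, ?_⟩
  · rw [rowSetW_kpromote_of_lt hfin hF hm hmq]
    ext x
    simp only [mem_rowSetW_pair, slideState_zero, slideState_one, slideRow_zero,
      exists_slideRow_row_one_eq_iff T h00 (show 1 < m + 1 by omega)]
  · rw [rowSetW_kpromote_self hfin hF]
    have hrow2 : ¬ ∃ j < l2, T.entry (1, j) = 0 := fun ⟨j, hj, h0⟩ =>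
      T.entry_ne_zero (c := (1, j)) (inShape_pair_iff.mpr (.inr ⟨rfl, hj⟩)) h0
    ext x
    simp only [mem_rowSetW_pair, slideState_zero, slideState_one, slideRow_zero,
      exists_slideRow_eq_zero _ hl1, hrow2, Set.mem_singleton_iff]
    tauto

lemma rowSetW_kpromote_of_isTeeter
    (hnb : ∀ j, 1 ≤ j → j ≤ q → ¬ isBalance [l1, l2] T.entry j) {jt : ℕ}
    (hjtq : jt ≤ q) (hjt : isTeeter [l1, l2] T.entry jt)
    (hfirst : ∀ m, 1 ≤ m → m < jt → ¬ isTeeter [l1, l2] T.entry m) :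
    rowSetW [l1, l2] T.entry jt = {1, 2} ∧
    (∀ m, 1 ≤ m → m < q →
      rowSetW [l1, l2] (kpromote [l1, l2] q T.entry) m =
        if m + 1 = jt then {1} else rowSetW [l1, l2] T.entry (m + 1)) ∧
    rowSetW [l1, l2] (kpromote [l1, l2] q T.entry) q = {1, 2} := by
  have hl1 := T.pos_of_entry_zero_zero_eq_one h00
  obtain ⟨j1, hj1 : j1 < l1, h1⟩ := appearsRow_succ_iff.mp hjt.1
  obtain ⟨j2, hj2 : j2 < l2, h2⟩ := appearsRow_succ_iff.mp hjt.2.1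
  have hjt1 : 1 < jt := h2 ▸ T.one_lt_entry h00 hll (c := (1, j2)) hj2 (by simp)
  have hs : cnt [l1, l2] T.entry 2 jt - 1 = j2 := by rw [← h2, T.cnt_two_entry hj2]; rfl
  have hfin : iterSub [l1, l2] q 1 T.entry (q - 1) =
      slideState T.entry l1 (cnt [l1, l2] T.entry 2 jt) l2 := by
    rw [iterSub_eq_slideState_of_le T h00 hnb hll hjt hjtq hfirst (k := q - 1) (by omega)
      (by omega), Nat.sub_add_cancel (by omega), T.cnt_eq_length 0, T.cnt_eq_length 1]
    rfl
  have hF := fun c => slideState_ne_one_and_le T h00 hll (c := c)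
    (s := cnt [l1, l2] T.entry 2 jt) le_rfl
  refine ⟨?_, fun m hm hmq => ?_, ?_⟩
  · ext x
    simp only [mem_rowSetW_pair, Set.mem_insert_iff, Set.mem_singleton_iff]
    refine ⟨by tauto, ?_⟩
    rintro (rfl | rfl)
    exacts [.inl ⟨rfl, j1, hj1, h1⟩, .inr ⟨rfl, j2, hj2, h2⟩]
  · rw [rowSetW_kpromote_of_lt hfin hF hm hmq]
    ext x
    simp only [mem_rowSetW_pair, slideState_zero, slideState_one,
      exists_slideRow_row_one_eq_iff T h00 (show 1 < m + 1 by omega),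
      exists_slideRow_eq_iff (L := l2) (T.cnt_le 1 jt) (show m + 1 ≠ 0 by omega), hs,
      exists_ne_and_eq_iff_of_injOn (L := l2) (T.strictMonoOn_row 1).injOn hj2, h2]
    split_ifs with h
    · subst h
      simp only [ne_eq, not_true_eq_false, and_false, or_false, Set.mem_singleton_iff]
      exact ⟨And.left, fun hx => ⟨hx, j1, hj1, h1⟩⟩
    · simp only [mem_rowSetW_pair, ne_eq, Ne.symm h, not_false_eq_true, and_true]
  · rw [rowSetW_kpromote_self hfin hF]
    ext x
    simp only [mem_rowSetW_pair, slideState_zero, slideState_one,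
      exists_slideRow_eq_zero _ hl1, exists_slideRow_eq_zero _ (show 0 < l2 by omega),
      Set.mem_insert_iff, Set.mem_singleton_iff]
    tauto

end FinalState

/-- two-row K-promotion, the remaining cases: no balance point and no
teetering point; no balance point but a first teetering point `j_t`; and `w_1 = ∅`. -/
theorem two_row_Kpromotion_no_balance_cases
    (l1 l2 q : ℕ) (hll : l2 ≤ l1) (T : IncTab [l1, l2] q) :
    ((rowSetW [l1, l2] T.entry 1 ≠ (∅ : Set ℕ) ∧
      (∀ j, 1 ≤ j → j ≤ q → ¬ isBalance [l1, l2] T.entry j) ∧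
      (∀ j, 1 ≤ j → j ≤ q → ¬ isTeeter [l1, l2] T.entry j)) →
      (∀ m, 1 ≤ m → m < q →
        rowSetW [l1, l2] (kpromote [l1, l2] q T.entry) m =
          rowSetW [l1, l2] T.entry (m + 1)) ∧
      rowSetW [l1, l2] (kpromote [l1, l2] q T.entry) q = ({1} : Set ℕ)) ∧
    (∀ jt : ℕ,
      (rowSetW [l1, l2] T.entry 1 ≠ (∅ : Set ℕ) ∧
        (∀ j, 1 ≤ j → j ≤ q → ¬ isBalance [l1, l2] T.entry j) ∧
        1 ≤ jt ∧ jt ≤ q ∧ isTeeter [l1, l2] T.entry jt ∧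
        (∀ m, 1 ≤ m → m < jt → ¬ isTeeter [l1, l2] T.entry m)) →
      rowSetW [l1, l2] T.entry jt = ({1, 2} : Set ℕ) ∧
      (∀ m, 1 ≤ m → m < q →
        rowSetW [l1, l2] (kpromote [l1, l2] q T.entry) m =
          (if m + 1 = jt then ({1} : Set ℕ) else rowSetW [l1, l2] T.entry (m + 1))) ∧
      rowSetW [l1, l2] (kpromote [l1, l2] q T.entry) q = ({1, 2} : Set ℕ)) ∧
    (rowSetW [l1, l2] T.entry 1 = (∅ : Set ℕ) →
      (∀ m, 1 ≤ m → m < q →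
        rowSetW [l1, l2] (kpromote [l1, l2] q T.entry) m =
          rowSetW [l1, l2] T.entry (m + 1)) ∧
      rowSetW [l1, l2] (kpromote [l1, l2] q T.entry) q = (∅ : Set ℕ)) := by
  refine ⟨?_, ?_, rowSetW_kpromote_of_rowSetW_one_eq_empty T⟩
  · rintro ⟨hw1, hnb, hnt⟩
    exact rowSetW_kpromote_of_not_isTeeter T (T.entry_zero_zero_eq_one hll hw1) hll hnb hnt
  · rintro jt ⟨hw1, hnb, -, hjtq, hjt, hfirst⟩
    exact rowSetW_kpromote_of_isTeeter T (T.entry_zero_zero_eq_one hll hw1) hll hnb hjtq hjt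
      hfirst
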